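/- arXiv:0901.0168 — 8 statements merged into one kernel-verified Lean document; each statement's English description precedes it below -/
import Mathlib

section
/- For M ≥ 4 a power of 2 and 0 < θ < π/M, the sequence a_k = 2cos(πk/M + θ/2) − 2cos(π(k+1)/M − θ/2) is increasing in k for k = 0, 1, ..., M/2 − 1. -/
open Real

/-! Writing `x = π(k+1)/M`, `d = π/M` and `t = θ/2`, the sum-to-product formulas give
`a_{k+1} - a_k = 4 cos x (cos t - cos (d - t))`. Both factors are nonnegative: `x ≤ π/2`
because `k + 1 ≤ M/2`, and `0 ≤ t ≤ d - t ≤ π` because `0 < θ < π/M`. -/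

lemma Real.cos_sub_add_cos_add (x y : ℝ) : cos (x - y) + cos (x + y) = 2 * cos x * cos y := by
  rw [cos_sub, cos_add]
  ring

lemma Real.cos_sub_cos_le_cos_sub_cos {x d t : ℝ} (hx : 0 ≤ cos x) (ht : 0 ≤ t)
    (htd : t ≤ d - t) (hd : d - t ≤ π) :
    cos (x - (d - t)) - cos (x - t) ≤ cos (x + t) - cos (x + (d - t)) := by
  have hcos : cos (d - t) ≤ cos t := cos_le_cos_of_nonneg_of_le_pi ht hd htd
  have hsum_t := cos_sub_add_cos_add x t
  have hsum_dt := cos_sub_add_cos_add x (d - t)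
  linarith [mul_le_mul_of_nonneg_left hcos hx]

theorem stmt_0_general (M : ℕ)
    (θ : ℝ) (hθ0 : 0 < θ) (hθ : θ < π / M) :
    ∀ k : ℕ, k + 1 ≤ M / 2 - 1 →
      2 * Real.cos (π * k / M + θ / 2) - 2 * Real.cos (π * (k + 1) / M - θ / 2)
        ≤ 2 * Real.cos (π * (k + 1) / M + θ / 2)
            - 2 * Real.cos (π * (k + 2) / M - θ / 2) := by
  intro k hk
  have hM : (0 : ℝ) < M := by exact_mod_cast (show 0 < M by omega)
  have hkM : 2 * ((k : ℝ) + 1) ≤ M := by exact_mod_cast (show 2 * (k + 1) ≤ M by omega)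
  have hπM : π / M ≤ π := div_le_self pi_pos.le (by exact_mod_cast (show 1 ≤ M by omega))
  set x := π * (k + 1) / M
  have hx : 0 ≤ cos x := by
    refine cos_nonneg_of_mem_Icc ⟨by linarith [show 0 ≤ x by positivity], ?_⟩
    rw [div_le_iff₀ hM]
    nlinarith [pi_pos]
  have key := cos_sub_cos_le_cos_sub_cos (d := π / M) hx (by positivity : 0 ≤ θ / 2)
    (by linarith) (by linarith)
  have h_left : π * k / M + θ / 2 = x - (π / M - θ / 2) := by
    simp only [x]; field_simp; ring
  have h_right : π * (k + 2) / M - θ / 2 = x + (π / M - θ / 2) := by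
    simp only [x]; field_simp; ring
  rw [h_left, h_right]
  linarith

/-- For `M ≥ 4` a power of 2 and `0 < θ < π/M`, the sequence
`a_k = 2cos(πk/M + θ/2) − 2cos(π(k+1)/M − θ/2)` is increasing in `k`
for `k = 0, 1, ..., M/2 − 1`. -/
theorem stmt_0 (M : ℕ) (hM : 4 ≤ M) (hpow : ∃ r : ℕ, M = 2 ^ r)
    (θ : ℝ) (hθ0 : 0 < θ) (hθ : θ < π / M) :
    ∀ k : ℕ, k + 1 ≤ M / 2 - 1 →
      2 * Real.cos (π * k / M + θ / 2) - 2 * Real.cos (π * (k + 1) / M - θ / 2)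
        ≤ 2 * Real.cos (π * (k + 1) / M + θ / 2)
            - 2 * Real.cos (π * (k + 2) / M - θ / 2) :=
  stmt_0_general M θ hθ0 hθ
end

section
/- For M ≥ 4 a power of 2 and 0 < θ < π/M, the sequence b_k = 2cos(πk/M + θ/2) − 2cos(π(k+2)/M − θ/2) is increasing in k for k = 0, 1, ..., M/2 − 2. -/
open Real

/-!
Writing `x = π(k+1)/M` and `δ = π/M − θ/2`, the two angles of `b_k` are `x − δ` and `x + δ`, so the
sum-to-product formula gives `b_k = 4 sin(π(k+1)/M) sin δ`. Here `0 < δ < π`, so `sin δ > 0`, and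
`π(k+1)/M` stays in `[0, π/2]`, where the sine is increasing.
-/

namespace Real

theorem two_mul_cos_sub_sub_two_mul_cos_add (x δ : ℝ) :
    2 * cos (x - δ) - 2 * cos (x + δ) = 4 * sin x * sin δ := by
  rw [cos_sub, cos_add]
  ring

theorem two_mul_cos_sub_sub_two_mul_cos_add_le {x y δ : ℝ} (hδ : 0 ≤ sin δ)
    (hx : -(π / 2) ≤ x) (hy : y ≤ π / 2) (hxy : x ≤ y) :
    2 * cos (x - δ) - 2 * cos (x + δ) ≤ 2 * cos (y - δ) - 2 * cos (y + δ) := by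
  rw [two_mul_cos_sub_sub_two_mul_cos_add, two_mul_cos_sub_sub_two_mul_cos_add]
  gcongr
  exact sin_le_sin_of_le_of_le_pi_div_two hx hy hxy

end Real

theorem stmt_1_general (M : ℕ)
    (θ : ℝ) (hθ0 : 0 < θ) (hθ : θ < π / M) :
    ∀ k : ℕ, k + 1 ≤ M / 2 - 2 →
      2 * Real.cos (π * k / M + θ / 2) - 2 * Real.cos (π * (k + 2) / M - θ / 2)
        ≤ 2 * Real.cos (π * (k + 1) / M + θ / 2)
            - 2 * Real.cos (π * (k + 3) / M - θ / 2) := by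
  intro k hk
  have hkM : 2 * ((k : ℝ) + 3) ≤ M := by exact_mod_cast (by omega : 2 * (k + 3) ≤ M)
  have hM : (0 : ℝ) < M := by linarith
  have hπM : π / M ≤ π := div_le_self pi_pos.le (by linarith)
  have hδ : 0 ≤ sin (π / M - θ / 2) := sin_nonneg_of_nonneg_of_le_pi (by linarith) (by linarith)
  have hx : 0 ≤ π * (k + 1) / M := by positivity
  have hy : π * (k + 2) / M ≤ π / 2 := by rw [div_le_div_iff₀ hM two_pos]; nlinarith [pi_pos]
  have hmono := two_mul_cos_sub_sub_two_mul_cos_add_le hδ (by linarith [pi_pos]) hy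
    (by gcongr; linarith : π * (k + 1) / M ≤ π * (k + 2) / M)
  convert hmono using 4 <;> ring

/-- For `M ≥ 4` a power of 2 and `0 < θ < π/M`, the sequence
`b_k = 2cos(πk/M + θ/2) − 2cos(π(k+2)/M − θ/2)` is increasing in `k`
for `k = 0, 1, ..., M/2 − 2`. -/
theorem stmt_1 (M : ℕ) (hM : 4 ≤ M) (hpow : ∃ r : ℕ, M = 2 ^ r)
    (θ : ℝ) (hθ0 : 0 < θ) (hθ : θ < π / M) :
    ∀ k : ℕ, k + 1 ≤ M / 2 - 2 →
      2 * Real.cos (π * k / M + θ / 2) - 2 * Real.cos (π * (k + 2) / M - θ / 2)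
        ≤ 2 * Real.cos (π * (k + 1) / M + θ / 2)
            - 2 * Real.cos (π * (k + 3) / M - θ / 2) :=
  stmt_1_general M θ hθ0 hθ
end

section
/- For M ≥ 8, 0 < θ < π/M, and 1 ≤ q ≤ M/2 − 3: 4 cos(θ/2 + πq/M) sin(π/M) ≥ 4 sin(π/M − θ/2) sin(2π/M). -/
open Real

/-!
Write `x = π / M` and `φ = θ / 2`. Product-to-sum turns `sin (x - φ) sin 2x` into
`(sin (2x - φ) - sin φ) sin x`. Dropping `sin φ ≥ 0` and using that `sin` increases on
`[-π/2, π/2]` gives `sin (2x - φ) - sin φ ≤ sin (3x - φ) = cos (φ + π/2 - 3x)`, and the bound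
`q ≤ M/2 - 3` is exactly `πq/M ≤ π/2 - 3x`, so `cos` decreasing on `[0, π]` finishes.
-/

theorem sin_sub_mul_sin_two_mul (x φ : ℝ) :
    sin (x - φ) * sin (2 * x) = (sin (2 * x - φ) - sin φ) * sin x := by
  rw [sin_sub (2 * x), sin_sub x, sin_two_mul, cos_two_mul]
  ring

theorem sin_two_mul_sub_sub_sin_le_cos_add {x φ y : ℝ} (hφ : 0 ≤ φ) (hφx : φ ≤ x)
    (hy : 0 ≤ y) (hyx : y ≤ π / 2 - 3 * x) :
    sin (2 * x - φ) - sin φ ≤ cos (φ + y) :=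
  calc sin (2 * x - φ) - sin φ
      ≤ sin (2 * x - φ) := sub_le_self _ <| sin_nonneg_of_nonneg_of_le_pi hφ (by linarith)
    _ ≤ sin (3 * x - φ) := sin_le_sin_of_le_of_le_pi_div_two (by linarith) (by linarith)
        (by linarith)
    _ = cos (φ + (π / 2 - 3 * x)) := by rw [← sin_pi_div_two_sub]; ring_nf
    _ ≤ cos (φ + y) := cos_le_cos_of_nonneg_of_le_pi (by linarith) (by linarith) (by linarith)

theorem sin_sub_mul_sin_two_mul_le_cos_add_mul_sin {x φ y : ℝ} (hφ : 0 ≤ φ) (hφx : φ ≤ x)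
    (hy : 0 ≤ y) (hyx : y ≤ π / 2 - 3 * x) :
    sin (x - φ) * sin (2 * x) ≤ cos (φ + y) * sin x := by
  rw [sin_sub_mul_sin_two_mul]
  exact mul_le_mul_of_nonneg_right (sin_two_mul_sub_sub_sin_le_cos_add hφ hφx hy hyx)
    (sin_nonneg_of_nonneg_of_le_pi (by linarith) (by linarith))

theorem stmt_4_general (M : ℕ) (hM : 8 ≤ M) (θ : ℝ) (hθ0 : 0 < θ) (hθ : θ < π / M)
    (q : ℕ) (hq2 : q ≤ M / 2 - 3) :
    4 * Real.sin (π / M - θ / 2) * Real.sin (2 * π / M)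
      ≤ 4 * Real.cos (θ / 2 + π * q / M) * Real.sin (π / M) := by
  have hMpos : (0 : ℝ) < M := by positivity
  have hqM : (2 * q + 6 : ℝ) ≤ M := by exact_mod_cast (by omega : 2 * q + 6 ≤ M)
  have hy : π * q / M ≤ π / 2 - 3 * (π / M) := by
    rw [div_le_iff₀ hMpos, sub_mul, mul_assoc, div_mul_cancel₀ _ hMpos.ne']
    nlinarith [pi_pos]
  have key := sin_sub_mul_sin_two_mul_le_cos_add_mul_sin (x := π / M) (φ := θ / 2)
    (by linarith)
    (by linarith) (by positivity) hy
  rw [mul_div_assoc 2 π]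
  linarith

/-- For `M ≥ 8`, `0 < θ < π/M`, and `1 ≤ q ≤ M/2 − 3`:
`4 cos(θ/2 + πq/M) sin(π/M) ≥ 4 sin(π/M − θ/2) sin(2π/M)`. -/
theorem stmt_4 (M : ℕ) (hM : 8 ≤ M) (θ : ℝ) (hθ0 : 0 < θ) (hθ : θ < π / M)
    (q : ℕ) (hq1 : 1 ≤ q) (hq2 : q ≤ M / 2 - 3) :
    4 * Real.sin (π / M - θ / 2) * Real.sin (2 * π / M)
      ≤ 4 * Real.cos (θ / 2 + π * q / M) * Real.sin (π / M) :=
  stmt_4_general M hM θ hθ0 hθ q hq2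
end

section
/- For M ≥ 8, 0 < θ < π/M, and 1 ≤ q ≤ M/2 − 3: 4 cos(π(q+1)/M − θ/2) sin(π/M) ≥ 4 sin(θ/2) sin(2π/M). -/
/-!
Put `φ = π / M` and `a = (q + 1) φ - θ / 2`. Since `0 ≤ θ / 2 ≤ φ ≤ π / 2`, monotonicity of `sin`
gives `sin (θ / 2) ≤ sin φ`; since `q + 3 ≤ M / 2` forces `0 ≤ a ≤ π / 2 - 2φ`, antitonicity of
`cos` gives `sin 2φ = cos (π / 2 - 2φ) ≤ cos a`. Multiplying the two nonnegative bounds concludes.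
-/

open Real

theorem Real.sin_le_cos_of_add_le_pi_div_two {a b : ℝ} (ha : 0 ≤ a) (hb : -(π / 2) ≤ b)
    (hab : a + b ≤ π / 2) : sin b ≤ cos a := by
  rw [← cos_pi_div_two_sub]
  exact cos_le_cos_of_nonneg_of_le_pi ha (by linarith) (by linarith)

theorem Real.sin_mul_sin_two_mul_le_cos_mul_sin {t φ a : ℝ} (ht : 0 ≤ t) (htφ : t ≤ φ)
    (ha : 0 ≤ a) (haφ : a + 2 * φ ≤ π / 2) :
    sin t * sin (2 * φ) ≤ cos a * sin φ := by
  have hφ : 0 ≤ φ := ht.trans htφ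
  have hsin : sin t ≤ sin φ :=
    sin_le_sin_of_le_of_le_pi_div_two (by linarith [pi_pos]) (by linarith) htφ
  have hcos : sin (2 * φ) ≤ cos a :=
    sin_le_cos_of_add_le_pi_div_two ha (by linarith [pi_pos]) haφ
  have hsin_two_mul : 0 ≤ sin (2 * φ) := sin_nonneg_of_nonneg_of_le_pi (by linarith) (by linarith)
  have hsinφ : 0 ≤ sin φ := sin_nonneg_of_nonneg_of_le_pi hφ (by linarith)
  rw [mul_comm (cos a)]
  exact mul_le_mul hsin hcos hsin_two_mul hsinφ

theorem stmt_5_general (M : ℕ) (hM : 8 ≤ M) (θ : ℝ) (hθ0 : 0 < θ) (hθ : θ < π / M)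
    (q : ℕ) (hq2 : q ≤ M / 2 - 3) :
    4 * Real.sin (θ / 2) * Real.sin (2 * π / M)
      ≤ 4 * Real.cos (π * (q + 1) / M - θ / 2) * Real.sin (π / M) := by
  set φ := π / M with hφ_def
  have hφ : 0 < φ := by positivity
  have hqM : 2 * ((q : ℝ) + 3) ≤ M := by exact_mod_cast (by omega : 2 * (q + 3) ≤ M)
  have hqφ : ((q : ℝ) + 3) * φ ≤ π / 2 := by
    rw [hφ_def, mul_div_assoc', div_le_div_iff₀ (by positivity) two_pos]
    nlinarith [pi_pos]
  have hq0 : (0 : ℝ) ≤ q := q.cast_nonneg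
  rw [show 2 * π / M = 2 * φ by ring, show π * (q + 1) / M = (q + 1) * φ by ring,
    mul_assoc, mul_assoc]
  refine mul_le_mul_of_nonneg_left ?_ (by norm_num)
  exact sin_mul_sin_two_mul_le_cos_mul_sin (by linarith) (by linarith) (by nlinarith)
    (by nlinarith)

/-- For `M ≥ 8`, `0 < θ < π/M`, and `1 ≤ q ≤ M/2 − 3`:
`4 cos(π(q+1)/M − θ/2) sin(π/M) ≥ 4 sin(θ/2) sin(2π/M)`. -/
theorem stmt_5 (M : ℕ) (hM : 8 ≤ M) (θ : ℝ) (hθ0 : 0 < θ) (hθ : θ < π / M)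
    (q : ℕ) (hq1 : 1 ≤ q) (hq2 : q ≤ M / 2 - 3) :
    4 * Real.sin (θ / 2) * Real.sin (2 * π / M)
      ≤ 4 * Real.cos (π * (q + 1) / M - θ / 2) * Real.sin (π / M) :=
  stmt_5_general M hM θ hθ0 hθ q hq2
end

section
/- For M ≥ 8 and 0 < θ < π/M, the real numbers r(O^{M/2−2}) = 2cos(π(M/2−2)/M + θ/2) and r(I^{M/2−1}) = 2sin(θ/2) satisfy r(O^{M/2−2}) − r(I^{M/2−1}) ≥ 4 sin(θ/2) sin(2π/M). -/
open Real

/-- For `M ≥ 8` and `0 < θ < π/M`, the distance between the radii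
`r(O^{M/2−2}) = 2cos(π(M/2−2)/M + θ/2)` and `r(I^{M/2−1}) = 2sin(θ/2)` satisfies
`r(O^{M/2−2}) − r(I^{M/2−1}) ≥ 4 sin(θ/2) sin(2π/M)`. -/
theorem stmt_6 (M : ℕ) (hM : 8 ≤ M) (θ : ℝ) (hθ0 : 0 < θ) (hθ : θ < π / M) :
    4 * Real.sin (θ / 2) * Real.sin (2 * π / M)
      ≤ 2 * Real.cos (π * ((M : ℝ) / 2 - 2) / M + θ / 2) - 2 * Real.sin (θ / 2) := by
  have hM8 : (8:ℝ) ≤ (M:ℝ) := by exact_mod_cast hM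
  have hM0 : (0:ℝ) < (M:ℝ) := by linarith
  have hpi : (0:ℝ) < π := Real.pi_pos
  set a : ℝ := 2 * π / M with ha
  set x : ℝ := θ / 2 with hx
  have hx0 : 0 < x := by rw [hx]; linarith
  have hxa : x < a / 4 := by
    have h : a / 4 = π / M / 2 := by rw [ha]; ring
    rw [hx, h]
    linarith
  have ha0 : 0 < a := by rw [ha]; positivity
  have ha4 : a ≤ π / 4 := by
    rw [ha, div_le_div_iff₀ hM0 (by norm_num)]
    nlinarith
  -- rewrite the cosine as a sine
  have hang : π * ((M : ℝ) / 2 - 2) / M + θ / 2 = π / 2 - (a - x) := by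
    rw [ha, hx]
    field_simp
    ring
  rw [hang, Real.cos_pi_div_two_sub]
  -- key inequality: 2 sin x * sin (a/2) ≤ sin (a/2 - x)
  have hs1 : Real.sin x ≤ Real.sin (a / 4) := by
    apply Real.sin_le_sin_of_le_of_le_pi_div_two (by linarith) (by linarith [Real.pi_pos]) hxa.le
  have hs2 : Real.sin (a / 2) ≤ 1 / 2 := by
    have : Real.sin (a / 2) ≤ Real.sin (π / 6) := by
      apply Real.sin_le_sin_of_le_of_le_pi_div_two (by linarith) (by linarith) (by linarith)
    rwa [Real.sin_pi_div_six] at this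
  have hs3 : Real.sin (a / 4) ≤ Real.sin (a / 2 - x) := by
    apply Real.sin_le_sin_of_le_of_le_pi_div_two (by linarith) (by linarith) (by linarith)
  have hsx0 : 0 ≤ Real.sin x := Real.sin_nonneg_of_nonneg_of_le_pi hx0.le (by linarith)
  have hsa2 : 0 ≤ Real.sin (a / 2) := Real.sin_nonneg_of_nonneg_of_le_pi (by linarith) (by linarith)
  have key : 2 * Real.sin x * Real.sin (a / 2) ≤ Real.sin (a / 2 - x) := by
    nlinarith
  -- trig identities
  have hsina : Real.sin a = 2 * Real.sin (a / 2) * Real.cos (a / 2) := by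
    rw [← Real.sin_two_mul, mul_div_cancel₀ a (two_ne_zero)]
  have hid : Real.sin (a - x) - Real.sin x = 2 * Real.cos (a / 2) * Real.sin (a / 2 - x) := by
    have e1 : Real.sin (a - x)
        = Real.sin (a / 2) * Real.cos (a / 2 - x) + Real.cos (a / 2) * Real.sin (a / 2 - x) := by
      rw [show a - x = a / 2 + (a / 2 - x) by ring, Real.sin_add]
    have e2 : Real.sin x
        = Real.sin (a / 2) * Real.cos (a / 2 - x) - Real.cos (a / 2) * Real.sin (a / 2 - x) := by
      nth_rewrite 1 [show x = a / 2 - (a / 2 - x) by ring]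
      rw [Real.sin_sub]
    rw [e1, e2]
    ring
  have hcos : 0 ≤ Real.cos (a / 2) := Real.cos_nonneg_of_mem_Icc ⟨by linarith, by linarith⟩
  calc 4 * Real.sin x * Real.sin a
      = 4 * Real.cos (a / 2) * (2 * Real.sin x * Real.sin (a / 2)) := by rw [hsina]; ring
    _ ≤ 4 * Real.cos (a / 2) * Real.sin (a / 2 - x) := by
        apply mul_le_mul_of_nonneg_left key (by linarith)
    _ = 2 * (Real.sin (a - x) - Real.sin x) := by rw [hid]; ring
    _ = 2 * Real.sin (a - x) - 2 * Real.sin x := by ring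
end

section
/- Let S₁ = {e^{i2πn/M} : 0 ≤ n < M} and S₂ = e^{iθ}S₁ with 0 < θ < 2π/M. Then every element of the sumset S₁ + S₂ = {a + b : a ∈ S₁, b ∈ S₂} has absolute value belonging to the set {2cos(πm/M + θ/2) : 0 ≤ m ≤ M/2 − 1} ∪ {2cos(π(m+1)/M − θ/2) : 0 ≤ m ≤ M/2 − 1}. -/
/-!
Both summands lie on the unit circle, so `‖e^{ix} + e^{iy}‖ = 2|cos((x - y)/2)|`, and here
`(x - y)/2 = πd/M - θ/2` for an integer `d`. As `|cos|` has period `π`, `d` may be replaced by a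
representative `k ∈ [1, M]`. If `2k ≤ M` the cosine is nonnegative, giving the second family with
`m = k - 1`; otherwise, since `M` is even, `πk/M - θ/2 ∈ [π/2, π]`, and reflecting in `π` gives the
first family with `m = M - k` (the residue `0` is the case `k = M`).
-/

open Real

theorem Complex.norm_exp_I_mul_add_exp_I_mul (x y : ℝ) :
    ‖Complex.exp (Complex.I * x) + Complex.exp (Complex.I * y)‖ =
      2 * |Real.cos ((x - y) / 2)| := by
  have hfactor : Complex.exp (Complex.I * x) + Complex.exp (Complex.I * y) =
      Complex.exp (((x + y) / 2 : ℝ) * Complex.I) * (2 * Complex.cos ((x - y) / 2 : ℝ)) := by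
    rw [Complex.cos, mul_div_cancel₀ _ two_ne_zero, mul_add, ← Complex.exp_add,
      ← Complex.exp_add]
    push_cast
    ring_nf
  rw [hfactor, norm_mul, Complex.norm_exp_ofReal_mul_I, norm_mul, ← Complex.ofReal_cos,
    Complex.norm_real, Real.norm_eq_abs, one_mul, Complex.norm_two]

theorem Real.abs_cos_add_int_mul_pi (x : ℝ) (n : ℤ) : |cos (x + n * π)| = |cos x| := by
  rw [cos_add_int_mul_pi, abs_mul, abs_neg_one_zpow, one_mul]

theorem exists_abs_cos_pi_mul_div_eq (M : ℕ) (hM : 0 < M) (d : ℤ) (α : ℝ) :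
    ∃ k : ℕ, 1 ≤ k ∧ k ≤ M ∧ |cos (π * d / M - α)| = |cos (π * k / M - α)| := by
  set q := (d - 1) / M
  set r := (d - 1) % M
  have hr0 : 0 ≤ r := Int.emod_nonneg _ (by omega)
  have hrM : r < M := Int.emod_lt_of_pos _ (by omega)
  have hdiv : r + M * q = d - 1 := Int.emod_add_mul_ediv _ _
  have hd : (d : ℝ) = M * q + (r.toNat + 1 : ℕ) := by
    exact_mod_cast (by omega : d = M * q + ((r.toNat + 1 : ℕ) : ℤ))
  refine ⟨r.toNat + 1, by omega, by omega, ?_⟩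
  rw [hd, ← abs_cos_add_int_mul_pi (π * (r.toNat + 1 : ℕ) / M - α) q]
  congr 2
  field_simp
  ring

theorem exists_abs_cos_pi_mul_div_sub_eq (M : ℕ) (hEven : Even M) (k : ℕ) (hk1 : 1 ≤ k)
    (hkM : k ≤ M) (α : ℝ) (hα0 : 0 ≤ α) (hα : α ≤ π / M) :
    ∃ m : ℕ, m ≤ M / 2 - 1 ∧
      (|cos (π * k / M - α)| = cos (π * m / M + α) ∨
        |cos (π * k / M - α)| = cos (π * (m + 1) / M - α)) := by
  have hM2 : M / 2 * 2 = M := Nat.div_two_mul_two_of_even hEven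
  have hMpos : (0 : ℝ) < M := by exact_mod_cast (by omega : 0 < M)
  have hk : π * k / M = k * (π / M) := by ring
  have hπ : π = M * (π / M) := by field_simp
  have hu : 0 ≤ π / M := by positivity
  by_cases hhalf : 2 * k ≤ M
  · refine ⟨k - 1, by omega, Or.inr ?_⟩
    have hkR : (1 : ℝ) ≤ k ∧ 2 * (k : ℝ) ≤ M := by
      constructor <;> norm_cast
    rw [Nat.cast_pred hk1, sub_add_cancel, abs_of_nonneg]
    apply cos_nonneg_of_neg_pi_div_two_le_of_le <;> rw [hk] <;> nlinarith
  · refine ⟨M - k, by omega, Or.inl ?_⟩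
    have hkR : (M : ℝ) + 2 ≤ 2 * k ∧ (k : ℝ) ≤ M := by
      constructor <;> norm_cast; omega
    have hreflect : π * ((M - k : ℕ) : ℝ) / M + α = π - (π * k / M - α) := by
      rw [Nat.cast_sub hkM]
      field_simp
      ring
    rw [hreflect, cos_pi_sub, abs_of_nonpos]
    apply cos_nonpos_of_pi_div_two_le_of_le <;> rw [hk] <;> nlinarith

/-- Every element of the sumset of an `M`-PSK constellation with its rotation by
`θ` has modulus `2cos(πm/M + θ/2)` or `2cos(π(m+1)/M − θ/2)` for some
`0 ≤ m ≤ M/2 − 1`. -/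
theorem stmt_7 (M : ℕ) (hM : 0 < M) (hEven : Even M)
    (θ : ℝ) (hθ0 : 0 < θ) (hθ : θ < 2 * π / M) :
    ∀ a b : ℂ,
      (∃ n : ℕ, n < M ∧ a = Complex.exp (Complex.I * (2 * π * n / M : ℝ))) →
      (∃ n' : ℕ, n' < M ∧ b = Complex.exp (Complex.I * (2 * π * n' / M + θ : ℝ))) →
      ∃ m : ℕ, m ≤ M / 2 - 1 ∧
        (‖a + b‖ = 2 * Real.cos (π * m / M + θ / 2) ∨
         ‖a + b‖ = 2 * Real.cos (π * (m + 1) / M - θ / 2)) := by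
  rintro a b ⟨n, -, rfl⟩ ⟨n', -, rfl⟩
  have hangle : (2 * π * n / M - (2 * π * n' / M + θ)) / 2
      = π * ((n - n' : ℤ) : ℝ) / M - θ / 2 := by
    push_cast
    ring
  obtain ⟨k, hk1, hkM, hk⟩ := exists_abs_cos_pi_mul_div_eq M hM (n - n') (θ / 2)
  rw [Complex.norm_exp_I_mul_add_exp_I_mul, hangle, hk]
  have hθ2 : θ / 2 ≤ π / M := by
    rw [mul_div_assoc] at hθ
    linarith
  obtain ⟨m, hm, h | h⟩ :=
    exists_abs_cos_pi_mul_div_sub_eq M hEven k hk1 hkM (θ / 2) (by positivity) hθ2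
  · exact ⟨m, hm, Or.inl (by rw [h])⟩
  · exact ⟨m, hm, Or.inr (by rw [h])⟩
end

section
/- Let S₁ = {1, ω, ω²} where ω = e^{i2π/3}, and S₂ = {−1, 1+ω, 1+ω²}. Then the sum map φ : S₁ × S₂ → ℂ, φ(a,b) = a + b, is not injective, even though |S₁ ∩ S₂| ≤ 1. -/
open Real

/-! Since `ω ≠ 1` is a root of `X ^ 2 + X + 1`, both `1 + (-1)` and `ω + (1 + ω ^ 2)` vanish, so the
sum map identifies two distinct pairs. The same relation gives `1 + ω = -ω ^ 2` and
`1 + ω ^ 2 = -ω`, so every element of `S₁` cubes to `1` and every element of `S₂` cubes to `-1`;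
hence the two sets are even disjoint. -/

section CubeRootsOfUnity

variable {R : Type*} [CommRing R] {ω : R}

lemma IsPrimitiveRoot.sq_add_self_add_one [IsDomain R] (hω : IsPrimitiveRoot ω 3) :
    ω ^ 2 + ω + 1 = 0 := by
  have h := hω.geom_sum_eq_zero (by norm_num)
  simp only [Finset.sum_range_succ, Finset.sum_range_zero, pow_zero, pow_one, zero_add] at h
  linear_combination h

lemma pow_three_eq_one_of_mem (h : ω ^ 2 + ω + 1 = 0) {x : R} (hx : x ∈ ({1, ω, ω ^ 2} : Set R)) :
    x ^ 3 = 1 := by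
  rcases hx with rfl | rfl | rfl
  · exact one_pow 3
  · linear_combination (x - 1) * h
  · linear_combination (ω - 1) * (ω ^ 3 + 1) * h

lemma pow_three_eq_neg_one_of_mem (h : ω ^ 2 + ω + 1 = 0) {y : R}
    (hy : y ∈ ({-1, 1 + ω, 1 + ω ^ 2} : Set R)) : y ^ 3 = -1 := by
  rcases hy with rfl | rfl | rfl
  · norm_num
  · linear_combination (ω + 2) * h
  · linear_combination (ω ^ 4 - ω ^ 3 + 3 * ω ^ 2 - 2 * ω + 2) * h

lemma disjoint_of_sq_add_self_add_one (h : ω ^ 2 + ω + 1 = 0) (h2 : (2 : R) ≠ 0) :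
    Disjoint ({1, ω, ω ^ 2} : Set R) ({-1, 1 + ω, 1 + ω ^ 2} : Set R) :=
  Set.disjoint_left.mpr fun _ hx hy =>
    h2 (by linear_combination pow_three_eq_neg_one_of_mem h hy - pow_three_eq_one_of_mem h hx)

lemma not_injOn_add_of_sq_add_self_add_one (h : ω ^ 2 + ω + 1 = 0) (hω : ω ≠ 1) :
    ¬ Set.InjOn (fun p : R × R => p.1 + p.2)
      (({1, ω, ω ^ 2} : Set R) ×ˢ ({-1, 1 + ω, 1 + ω ^ 2} : Set R)) := fun hinj =>
  hω (congrArg Prod.fst (hinj (x₁ := (1, -1)) (x₂ := (ω, 1 + ω ^ 2)) (by simp) (by simp)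
    (show (1 : R) + -1 = ω + (1 + ω ^ 2) by linear_combination -h))).symm

end CubeRootsOfUnity

/-- For `S₁ = {1, ω, ω²}` with `ω = e^{i2π/3}` and `S₂ = {−1, 1+ω, 1+ω²}`,
the sum map `φ(a,b) = a + b` on `S₁ × S₂` is not injective, even though
`S₁ ∩ S₂` has at most one element. -/
theorem stmt_11 (ω : ℂ) (hω : ω = Complex.exp (Complex.I * (2 * π / 3 : ℝ))) :
    ¬ Set.InjOn (fun p : ℂ × ℂ => p.1 + p.2)
        (({1, ω, ω ^ 2} : Set ℂ) ×ˢ ({-1, 1 + ω, 1 + ω ^ 2} : Set ℂ)) ∧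
    Set.Subsingleton (({1, ω, ω ^ 2} : Set ℂ) ∩ ({-1, 1 + ω, 1 + ω ^ 2} : Set ℂ)) := by
  have hprim : IsPrimitiveRoot ω 3 := by
    rw [hω]
    convert Complex.isPrimitiveRoot_exp 3 (by norm_num) using 2
    push_cast
    ring
  have h := hprim.sq_add_self_add_one
  refine ⟨not_injOn_add_of_sq_add_self_add_one h (hprim.ne_one (by norm_num)), ?_⟩
  rw [Set.disjoint_iff_inter_eq_empty.mp (disjoint_of_sq_add_self_add_one h two_ne_zero)]
  exact Set.subsingleton_empty
end

section
/- Let M ≥ 8 be a power of 2, θ = π/M, and S₁ the M-th roots of unity, S₂ = e^{iθ}S₁. Let S₁ = A₁ ∪ A₂ and S₂ = B₁ ∪ B₂ be any partitions into two sets of size M/2 each. If some part, say A₁, contains two adjacent points e^{i2πa/M} and e^{i2π(a+1)/M}, then at least one of the four sumsets Aᵢ + Bⱼ contains two distinct points whose Euclidean distance is strictly less than 4 sin(π/(2M)) sin(2π/M). -/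
/-!
Put `ω = e^{iπ/M}`, so that `S₁ = {ω^{2n}}`, `S₂ = {ω^{2n+1}}` and `ω^M = -1`. Then
`ω^k + ω^{k+M+1} = (1 - ω) ω^k`: every point of the rotated, scaled circle `(1 - ω) ω^k` is a sum
of one point of `S₁` and one of `S₂`, and two of these points `d ∈ {1, 2, 3}` steps apart are at
distance `4 sin(π/2M) sin(dπ/2M) < 4 sin(π/2M) sin(2π/M)`.

Label the `k`-th point by the pair of parts containing its two summands. If no sumset `Aᵢ + Bⱼ`
contains two distinct points closer than the bound, any four consecutive points carry four
distinct labels, hence all four labels, so the labelling is `4`-periodic. On even `k` this says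
that membership of `ω^{2m}` in `A₁` has period `2` in `m`, and the two adjacent points of `A₁`
then put all of `S₁` into `A₁`, leaving no room for `A₂`.
-/

open Real

theorem Function.periodic_of_ne_of_lt_card {X : Type*} [Fintype X] {f : ℕ → X}
    (hf : ∀ i j, i < j → j < i + Fintype.card X → f i ≠ f j) :
    Function.Periodic f (Fintype.card X) := by
  intro k
  have hinj : Function.Injective fun m : Fin (Fintype.card X) => f (k + m) := by
    intro m m' h
    by_contra hne
    rcases lt_or_gt_of_ne (Fin.val_ne_of_ne hne) with hlt | hlt
    · exact hf (k + m) (k + m') (by omega) (by omega) h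
    · exact hf (k + m') (k + m) (by omega) (by omega) h.symm
  obtain ⟨m, hm⟩ := ((Fintype.bijective_iff_injective_and_card _).2
    ⟨hinj, Fintype.card_fin _⟩).2 (f (k + Fintype.card X))
  rcases Nat.eq_zero_or_pos m with h0 | hpos
  · simpa [h0] using hm.symm
  · exact absurd hm (hf (k + m) (k + Fintype.card X) (by omega) (by omega))

theorem Finset.exists_mem_mem_of_mem_iff {α : Type*} [DecidableEq α] {A₁ A₂ : Finset α}
    {x x' : α} (hx : x ∈ A₁ ∪ A₂) (hx' : x' ∈ A₁ ∪ A₂) (h : x ∈ A₁ ↔ x' ∈ A₁) :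
    ∃ A, (A = A₁ ∨ A = A₂) ∧ x ∈ A ∧ x' ∈ A := by
  by_cases h₁ : x ∈ A₁
  · exact ⟨A₁, .inl rfl, h₁, h.1 h₁⟩
  · exact ⟨A₂, .inr rfl, (Finset.mem_union.1 hx).resolve_left h₁,
      (Finset.mem_union.1 hx').resolve_left (h₁ ∘ h.2)⟩

theorem Complex.exp_I_mul_ofReal_eq_pow {θ t : ℝ} {k : ℕ} (ht : t = k * θ) :
    Complex.exp (Complex.I * t) = Complex.exp (Complex.I * θ) ^ k := by
  rw [ht, ← Complex.exp_nat_mul]; push_cast; ring_nf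

theorem Complex.norm_one_sub_exp_I_mul_pow (θ : ℝ) (d : ℕ) :
    ‖1 - Complex.exp (Complex.I * θ) ^ d‖ = |2 * Real.sin (d * θ / 2)| := by
  rw [← Complex.exp_I_mul_ofReal_eq_pow rfl, norm_sub_rev, Complex.norm_exp_I_mul_ofReal_sub_one,
    Real.norm_eq_abs]

theorem norm_one_sub_mul_pow_sub {ω : ℂ} (hω : ‖ω‖ = 1) (i d : ℕ) :
    ‖(1 - ω) * ω ^ i - (1 - ω) * ω ^ (i + d)‖ = ‖1 - ω‖ * ‖1 - ω ^ d‖ := by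
  rw [pow_add, show (1 - ω) * ω ^ i - (1 - ω) * (ω ^ i * ω ^ d) = ω ^ i * ((1 - ω) * (1 - ω ^ d))
    by ring, norm_mul, norm_mul, norm_pow, hω, one_pow, one_mul]

theorem Complex.norm_one_sub_exp_I_mul_pow_sub_mem_Ioo {θ : ℝ} (hθ : 0 < θ) (hθπ : θ ≤ π / 4)
    {i j : ℕ} (hij : i < j) (hji : j < i + 4) :
    ‖(1 - Complex.exp (Complex.I * θ)) * Complex.exp (Complex.I * θ) ^ i -
        (1 - Complex.exp (Complex.I * θ)) * Complex.exp (Complex.I * θ) ^ j‖ ∈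
      Set.Ioo 0 (4 * Real.sin (θ / 2) * Real.sin (2 * θ)) := by
  obtain ⟨d, rfl⟩ : ∃ d, j = i + d := ⟨j - i, by omega⟩
  have hd₁ : (1 : ℝ) ≤ d := by exact_mod_cast (by omega : 1 ≤ d)
  have hd₃ : (d : ℝ) ≤ 3 := by exact_mod_cast (by omega : d ≤ 3)
  have hsin₁ : 0 < Real.sin (θ / 2) := Real.sin_pos_of_pos_of_lt_pi (by linarith) (by linarith)
  have hsin_d : 0 < Real.sin (d * θ / 2) :=
    Real.sin_pos_of_pos_of_lt_pi (by positivity) (by nlinarith)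
  have hsin_lt : Real.sin (d * θ / 2) < Real.sin (2 * θ) :=
    Real.sin_lt_sin_of_lt_of_le_pi_div_two (by nlinarith) (by linarith) (by nlinarith)
  have hnorm₁ := Complex.norm_one_sub_exp_I_mul_pow θ 1
  rw [pow_one, Nat.cast_one, one_mul] at hnorm₁
  rw [norm_one_sub_mul_pow_sub (Complex.norm_exp_I_mul_ofReal θ), hnorm₁,
    Complex.norm_one_sub_exp_I_mul_pow, abs_of_pos (by positivity), abs_of_pos (by positivity)]
  constructor <;> nlinarith [mul_lt_mul_of_pos_left hsin_lt hsin₁]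

theorem pow_add_pow_add_add_one {R : Type*} [CommRing R] {ω : R} {M : ℕ} (hω : ω ^ M = -1)
    (k : ℕ) : ω ^ k + ω ^ (k + M + 1) = (1 - ω) * ω ^ k := by
  rw [pow_add, pow_add, hω]; ring

theorem pow_two_mul_add_mem_image_range {G : Type*} [Monoid G] [DecidableEq G] {ω : G} {M : ℕ}
    (hM : 0 < M) (hω : ω ^ (2 * M) = 1) {r : ℕ} {f : ℕ → G} (hf : ∀ k, f k = ω ^ (2 * k + r))
    (n : ℕ) : ω ^ (2 * n + r) ∈ (Finset.range M).image f := by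
  refine Finset.mem_image.2 ⟨n % M, Finset.mem_range.2 (Nat.mod_lt n hM), ?_⟩
  rw [hf, pow_add, pow_add, pow_mul, pow_mul, ← pow_eq_pow_mod n (by rw [← pow_mul, hω])]

theorem pow_two_mul_mem_of_forall_mem_iff {G : Type*} [Monoid G] {ω : G} {M : ℕ}
    (hM : 0 < M) (hω : ω ^ (2 * M) = 1) {A : Finset G}
    (hper : ∀ m, ω ^ (2 * (m + 2)) ∈ A ↔ ω ^ (2 * m) ∈ A) {a : ℕ}
    (h₀ : ω ^ (2 * a) ∈ A) (h₁ : ω ^ (2 * (a + 1)) ∈ A) (n : ℕ) : ω ^ (2 * n) ∈ A := by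
  have hfrom_a r : ω ^ (2 * (a + r)) ∈ A := by
    induction r using Nat.twoStepInduction with
    | zero => exact h₀
    | one => exact h₁
    | more r hr _ => exact (hper (a + r)).2 hr
  have hshift : ω ^ (2 * (n + M * a)) = ω ^ (2 * n) := by
    rw [mul_add, pow_add, ← mul_assoc, pow_mul ω (2 * M), hω, one_pow, mul_one]
  rw [← hshift, show n + M * a = a + (n + M * a - a) by
    have := Nat.le_mul_of_pos_left a hM; omega]
  exact hfrom_a _

theorem Complex.exp_I_mul_pi_div_pow_self {M : ℕ} (hM : M ≠ 0) :
    Complex.exp (Complex.I * (π / M : ℝ)) ^ M = -1 := by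
  rw [← Complex.exp_I_mul_ofReal_eq_pow (t := π) (by field_simp), mul_comm, Complex.exp_pi_mul_I]

theorem Complex.exp_I_mul_pi_div_pow_two_mul_self {M : ℕ} (hM : M ≠ 0) :
    Complex.exp (Complex.I * (π / M : ℝ)) ^ (2 * M) = 1 := by
  rw [pow_mul', Complex.exp_I_mul_pi_div_pow_self hM, neg_one_sq]

theorem Complex.exp_I_mul_pi_div_pow_mem_of_even {M m : ℕ} (hM : 0 < M) (hm : Even m) :
    Complex.exp (Complex.I * (π / M : ℝ)) ^ m ∈ (Finset.range M).image
      (fun n : ℕ => Complex.exp (Complex.I * (2 * π * n / M : ℝ))) := by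
  obtain ⟨n, rfl⟩ := hm
  rw [← two_mul]
  exact pow_two_mul_add_mem_image_range (r := 0) hM
    (Complex.exp_I_mul_pi_div_pow_two_mul_self hM.ne')
    (fun k => Complex.exp_I_mul_ofReal_eq_pow (by push_cast; ring)) n

theorem Complex.exp_I_mul_pi_div_pow_mem_of_odd {M m : ℕ} (hM : 0 < M) (hm : Odd m) :
    Complex.exp (Complex.I * (π / M : ℝ)) ^ m ∈ (Finset.range M).image
      (fun n : ℕ => Complex.exp (Complex.I * (2 * π * n / M + π / M : ℝ))) := by
  obtain ⟨n, rfl⟩ := hm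
  exact pow_two_mul_add_mem_image_range hM (Complex.exp_I_mul_pi_div_pow_two_mul_self hM.ne')
    (fun k => Complex.exp_I_mul_ofReal_eq_pow (by push_cast; field_simp)) n

def SumsetsSeparated (A₁ A₂ B₁ B₂ : Finset ℂ) (δ : ℝ) : Prop :=
  ∀ A B : Finset ℂ, (A = A₁ ∨ A = A₂) → (B = B₁ ∨ B = B₂) →
    ∀ x ∈ A, ∀ y ∈ B, ∀ x' ∈ A, ∀ y' ∈ B, x + y ≠ x' + y' → δ ≤ ‖(x + y) - (x' + y')‖

theorem pow_two_mul_add_two_mem_iff_of_sumsetsSeparated {ω : ℂ} {M : ℕ} (hM : Even M)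
    (hωM : ω ^ M = -1) {A₁ A₂ B₁ B₂ : Finset ℂ} (hA : ∀ m, Even m → ω ^ m ∈ A₁ ∪ A₂)
    (hB : ∀ m, Odd m → ω ^ m ∈ B₁ ∪ B₂) {δ : ℝ} (hsep : SumsetsSeparated A₁ A₂ B₁ B₂ δ)
    (hclose : ∀ i j, i < j → j < i + 4 → ‖(1 - ω) * ω ^ i - (1 - ω) * ω ^ j‖ ∈ Set.Ioo 0 δ)
    (m : ℕ) : ω ^ (2 * (m + 2)) ∈ A₁ ↔ ω ^ (2 * m) ∈ A₁ := by
  let x k := if Even k then ω ^ k else ω ^ (k + M + 1)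
  let y k := if Even k then ω ^ (k + M + 1) else ω ^ k
  have hx k : x k ∈ A₁ ∪ A₂ := by
    by_cases hk : Even k <;> simp only [x, hk, if_true, if_false] <;> apply hA <;> grind
  have hy k : y k ∈ B₁ ∪ B₂ := by
    by_cases hk : Even k <;> simp only [y, hk, if_true, if_false] <;> apply hB <;> grind
  have hxy k : x k + y k = (1 - ω) * ω ^ k := by
    rw [← pow_add_pow_add_add_one hωM]
    by_cases hk : Even k <;> simp only [x, y, hk, if_true, if_false, add_comm]
  let label k : Bool × Bool := (decide (x k ∈ A₁), decide (y k ∈ B₁))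
  have hlabel i j (hij : i < j) (hji : j < i + Fintype.card (Bool × Bool)) :
      label i ≠ label j := by
    intro hij_eq
    obtain ⟨A, hA', hxi, hxj⟩ := Finset.exists_mem_mem_of_mem_iff (hx i) (hx j)
      (by simpa [label] using congrArg Prod.fst hij_eq)
    obtain ⟨B, hB', hyi, hyj⟩ := Finset.exists_mem_mem_of_mem_iff (hy i) (hy j)
      (by simpa [label] using congrArg Prod.snd hij_eq)
    have hdist := hclose i j hij (by simpa using hji)
    rw [← hxy, ← hxy] at hdist
    exact (hsep A B hA' hB' _ hxi _ hyi _ hxj _ hyj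
      (sub_ne_zero.1 (norm_pos_iff.1 hdist.1))).not_gt hdist.2
  have hperiod := congrArg Prod.fst (Function.periodic_of_ne_of_lt_card hlabel (2 * m))
  have hx_even k (hk : Even k) : x k = ω ^ k := if_pos hk
  simpa [label, hx_even, show 2 * m + 4 = 2 * (m + 2) by ring] using hperiod

theorem stmt_14_general (M : ℕ) (hM : 8 ≤ M) (hpow : ∃ r : ℕ, M = 2 ^ r)
    (A₁ A₂ B₁ B₂ : Finset ℂ)
    (hA : A₁ ∪ A₂ = (Finset.range M).image
      (fun n : ℕ => Complex.exp (Complex.I * (2 * π * n / M : ℝ))))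
    (hAdisj : Disjoint A₁ A₂) (hA₂ : A₂.card = M / 2)
    (hB : B₁ ∪ B₂ = (Finset.range M).image
      (fun n : ℕ => Complex.exp (Complex.I * (2 * π * n / M + π / M : ℝ))))
    (a : ℕ)
    (ha1 : Complex.exp (Complex.I * (2 * π * a / M : ℝ)) ∈ A₁)
    (ha2 : Complex.exp (Complex.I * (2 * π * (a + 1) / M : ℝ)) ∈ A₁) :
    ∃ A B : Finset ℂ, (A = A₁ ∨ A = A₂) ∧ (B = B₁ ∨ B = B₂) ∧
      ∃ x ∈ A, ∃ y ∈ B, ∃ x' ∈ A, ∃ y' ∈ B,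
        x + y ≠ x' + y' ∧
        ‖(x + y) - (x' + y')‖
          < 4 * Real.sin (π / (2 * M)) * Real.sin (2 * π / M) := by
  set ω := Complex.exp (Complex.I * (π / M : ℝ))
  have hexp (k : ℕ) (t : ℝ) (ht : t = k * (π / M)) : Complex.exp (Complex.I * t) = ω ^ k :=
    Complex.exp_I_mul_ofReal_eq_pow ht
  have hS₁ m (hm : Even m) : ω ^ m ∈ A₁ ∪ A₂ :=
    hA ▸ Complex.exp_I_mul_pi_div_pow_mem_of_even (by omega) hm
  have hS₂ m (hm : Odd m) : ω ^ m ∈ B₁ ∪ B₂ :=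
    hB ▸ Complex.exp_I_mul_pi_div_pow_mem_of_odd (by omega) hm
  have hclose i j (hij : i < j) (hji : j < i + 4) :=
    Complex.norm_one_sub_exp_I_mul_pow_sub_mem_Ioo (θ := π / M) (by positivity)
      (div_le_div_of_nonneg_left pi_pos.le (by norm_num) (by exact_mod_cast (by omega : 4 ≤ M)))
      hij hji
  rw [div_div, mul_comm (M : ℝ) 2, ← mul_div_assoc] at hclose
  by_contra hcon
  have hsep : SumsetsSeparated A₁ A₂ B₁ B₂ (4 * Real.sin (π / (2 * M)) * Real.sin (2 * π / M)) :=
    fun A B hA hB x hx y hy x' hx' y' hy' hne =>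
      not_lt.1 fun hlt => hcon ⟨A, B, hA, hB, x, hx, y, hy, x', hx', y', hy', hne, hlt⟩
  have hMeven : Even M := by
    obtain ⟨r, rfl⟩ := hpow
    exact (Nat.even_pow' (by rintro rfl; norm_num at hM)).2 even_two
  have hS₁_sub_A₁ := pow_two_mul_mem_of_forall_mem_iff (by omega)
    (Complex.exp_I_mul_pi_div_pow_two_mul_self (by omega))
    (pow_two_mul_add_two_mem_iff_of_sumsetsSeparated hMeven
      (Complex.exp_I_mul_pi_div_pow_self (by omega)) hS₁ hS₂ hsep hclose)
    (by rwa [hexp (2 * a) _ (by push_cast; ring)] at ha1)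
    (by rwa [hexp (2 * (a + 1)) _ (by push_cast; ring)] at ha2)
  obtain ⟨z, hz⟩ : A₂.Nonempty := Finset.card_pos.1 (by omega)
  obtain ⟨n, -, rfl⟩ := Finset.mem_image.1 (hA ▸ Finset.mem_union_right A₁ hz)
  rw [hexp (2 * n) _ (by push_cast; ring)] at hz
  exact Finset.disjoint_left.1 hAdisj (hS₁_sub_A₁ n) hz

/-- Optimality of Ungerboeck partitioning for `θ = π/M`: if `S₁` (the `M`-th
roots of unity) and `S₂ = e^{iθ}S₁` are each partitioned into two sets of size
`M/2`, and some part `A₁` contains two adjacent points `e^{i2πa/M}` and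
`e^{i2π(a+1)/M}`, then one of the four sumsets `Aᵢ + Bⱼ` contains two distinct
points at distance strictly less than `4 sin(π/(2M)) sin(2π/M)`. -/
theorem stmt_14 (M : ℕ) (hM : 8 ≤ M) (hpow : ∃ r : ℕ, M = 2 ^ r)
    (A₁ A₂ B₁ B₂ : Finset ℂ)
    (hA : A₁ ∪ A₂ = (Finset.range M).image
      (fun n : ℕ => Complex.exp (Complex.I * (2 * π * n / M : ℝ))))
    (hAdisj : Disjoint A₁ A₂) (hA₁ : A₁.card = M / 2) (hA₂ : A₂.card = M / 2)
    (hB : B₁ ∪ B₂ = (Finset.range M).image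
      (fun n : ℕ => Complex.exp (Complex.I * (2 * π * n / M + π / M : ℝ))))
    (hBdisj : Disjoint B₁ B₂) (hB₁ : B₁.card = M / 2) (hB₂ : B₂.card = M / 2)
    (a : ℕ)
    (ha1 : Complex.exp (Complex.I * (2 * π * a / M : ℝ)) ∈ A₁)
    (ha2 : Complex.exp (Complex.I * (2 * π * (a + 1) / M : ℝ)) ∈ A₁) :
    ∃ A B : Finset ℂ, (A = A₁ ∨ A = A₂) ∧ (B = B₁ ∨ B = B₂) ∧
      ∃ x ∈ A, ∃ y ∈ B, ∃ x' ∈ A, ∃ y' ∈ B,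
        x + y ≠ x' + y' ∧
        ‖(x + y) - (x' + y')‖
          < 4 * Real.sin (π / (2 * M)) * Real.sin (2 * π / M) :=
  stmt_14_general M hM hpow A₁ A₂ B₁ B₂ hA hAdisj hA₂ hB a ha1 ha2
end
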